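/- arXiv:1809.03070 — 2 statements merged into one kernel-verified Lean document; each statement's English description precedes it below -/
import Mathlib

section
/- (Sweep theorem, null-arc case.) Suppose s₁, s₂, s₃, s₄ : [0,1] → ℝ are continuous on [0,1] and differentiable on (0,1), satisfy the parallelogram and right-angle conditions p₁(t) + p₃(t) = p₂(t) + p₄(t) and ⟨p₂(t) − p₁(t), p₄(t) − p₁(t)⟩ = 0 for all t ∈ [0,1], and trace rectangles gracing γ on (0,1); suppose t ↦ Y(t) X′(t) − X(t) Y′(t) is integrable on [0,1]. If at both endpoints t = 0 and t = 1 one has s₂(t) = s₃(t) and s₄(t) = s₁(t) + 1 (so the rectangle degenerates to a chord of γ, with Y(0) = Y(1) = 0), then ∫₀¹ (Y(t) X′(t) − X(t) Y′(t)) dt = 0; that is, the shape loop of a null arc bounds signed area 0. -/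
/-!
With `Λ(σ) = ∫₀^σ det(γ, γ')`, the function `G = Λ(s₂) - Λ(s₁) + Λ(s₄) - Λ(s₃)` is a primitive of
`Y X' - X Y'` on `(0,1)`. Indeed, writing `u = p₂ - p₁` and `w = p₃ - p₂ = p₄ - p₁`, orthogonality
and positive orientation give `det(u, w) = ‖u‖ ‖w‖`, whence `Y X' - X Y' = det(u', w) - det(u, w')`,
and by bilinearity this is `det(p₂, p₂') - det(p₁, p₁') + det(p₄, p₄') - det(p₃, p₃')`.
At the degenerate endpoints `s₂ = s₃` and `s₄ = s₁ + 1`, so periodicity of `γ` gives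
`G = Λ(s₁ + 1) - Λ(s₁) = Λ(1)` at both ends, and the integral vanishes.
-/

noncomputable section

/-- The planar cross product `det(u,v) = u₁v₂ − u₂v₁`. -/
def pdet (u v : EuclideanSpace ℝ (Fin 2)) : ℝ := u 0 * v 1 - u 1 * v 0

open Set Filter Topology
open scoped RealInnerProductSpace

theorem HasDerivAt.norm {E : Type*} [NormedAddCommGroup E] [InnerProductSpace ℝ E]
    {f : ℝ → E} {f' : E} {t : ℝ} (hf : HasDerivAt f f' t) (h0 : f t ≠ 0) :
    HasDerivAt (‖f ·‖) (⟪f t, f'⟫ / ‖f t‖) t := by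
  have h := hf.norm_sq.sqrt (pow_ne_zero 2 (norm_ne_zero_iff.2 h0))
  simp only [Real.sqrt_sq (norm_nonneg _)] at h
  convert h using 1
  field_simp

section pdet

variable {u w : EuclideanSpace ℝ (Fin 2)}

theorem EuclideanSpace.real_inner_fin_two (u v : EuclideanSpace ℝ (Fin 2)) :
    ⟪u, v⟫ = u 0 * v 0 + u 1 * v 1 := by
  simp [PiLp.inner_apply, Fin.sum_univ_two, mul_comm]

theorem EuclideanSpace.real_norm_sq_fin_two (u : EuclideanSpace ℝ (Fin 2)) :
    ‖u‖ ^ 2 = u 0 ^ 2 + u 1 ^ 2 := by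
  simp [EuclideanSpace.real_norm_sq_eq, Fin.sum_univ_two]

theorem pdet_smul_right (c : ℝ) (u v : EuclideanSpace ℝ (Fin 2)) :
    pdet u (c • v) = c * pdet u v := by
  simp only [pdet, PiLp.smul_apply, smul_eq_mul]
  ring

theorem pdet_sq_add_inner_sq (u v : EuclideanSpace ℝ (Fin 2)) :
    pdet u v ^ 2 + ⟪u, v⟫ ^ 2 = ‖u‖ ^ 2 * ‖v‖ ^ 2 := by
  rw [EuclideanSpace.real_inner_fin_two, EuclideanSpace.real_norm_sq_fin_two,
    EuclideanSpace.real_norm_sq_fin_two, pdet]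
  ring

theorem pdet_eq_norm_mul_norm (horth : ⟪u, w⟫ = 0) (hpos : 0 < pdet u w) :
    pdet u w = ‖u‖ * ‖w‖ := by
  have h := pdet_sq_add_inner_sq u w
  rw [horth, ← mul_pow] at h
  exact (pow_left_inj₀ hpos.le (by positivity) two_ne_zero).1 (by linarith)

theorem norm_mul_pdet_eq_of_inner_eq_zero (horth : ⟪u, w⟫ = 0) (hpos : 0 < pdet u w)
    (v : EuclideanSpace ℝ (Fin 2)) : ‖u‖ * pdet v w = ‖w‖ * ⟪v, u⟫ := by
  have hu : 0 < ‖u‖ := norm_pos_iff.2 fun h => by simp [h, pdet] at hpos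
  refine mul_left_cancel₀ hu.ne' ?_
  have hcoord : ‖u‖ ^ 2 * pdet v w = pdet u w * ⟪v, u⟫ := by
    rw [EuclideanSpace.real_inner_fin_two] at horth ⊢
    rw [EuclideanSpace.real_norm_sq_fin_two, pdet, pdet]
    linear_combination (u 1 * v 0 - u 0 * v 1) * horth
  calc ‖u‖ * (‖u‖ * pdet v w) = pdet u w * ⟪v, u⟫ := by rw [← hcoord]; ring
    _ = ‖u‖ * (‖w‖ * ⟪v, u⟫) := by rw [pdet_eq_norm_mul_norm horth hpos]; ring

theorem norm_mul_inner_div_sub_eq_pdet (horth : ⟪u, w⟫ = 0) (hpos : 0 < pdet u w)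
    (u' w' : EuclideanSpace ℝ (Fin 2)) :
    ‖w‖ * (⟪u, u'⟫ / ‖u‖) - ‖u‖ * (⟪w, w'⟫ / ‖w‖) = pdet u' w - pdet u w' := by
  have hu : ‖u‖ ≠ 0 := norm_ne_zero_iff.2 fun h => by simp [h, pdet] at hpos
  have hw : ‖w‖ ≠ 0 := norm_ne_zero_iff.2 fun h => by simp [h, pdet] at hpos
  have h₁ := norm_mul_pdet_eq_of_inner_eq_zero horth hpos u'
  -- the pair `(w, -u)` is again orthogonal and positively oriented
  have h₂ := norm_mul_pdet_eq_of_inner_eq_zero (u := w) (w := -u)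
    (by rw [inner_neg_right, real_inner_comm, horth, neg_zero])
    (by simpa [pdet, mul_comm] using hpos) w'
  rw [norm_neg] at h₂
  simp only [pdet, PiLp.neg_apply] at h₁ h₂ ⊢
  rw [real_inner_comm] at h₁ h₂
  field_simp
  linear_combination ‖u‖ * h₂ - ‖w‖ * h₁

theorem pdet_parallelogram (a b c a' b' c' : EuclideanSpace ℝ (Fin 2)) :
    pdet b b' - pdet a a' + (pdet (a + c - b) (a' + c' - b') - pdet c c')
      = pdet (b' - a') (c - b) - pdet (b - a) (c' - b') := by
  simp only [pdet, PiLp.add_apply, PiLp.sub_apply]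
  ring

end pdet

theorem sweep_rate_eq_of_rectangle {p₁ p₂ p₃ p₄ : ℝ → EuclideanSpace ℝ (Fin 2)}
    {p₁' p₂' p₃' p₄' : EuclideanSpace ℝ (Fin 2)} {t : ℝ}
    (h₁ : HasDerivAt p₁ p₁' t) (h₂ : HasDerivAt p₂ p₂' t) (h₃ : HasDerivAt p₃ p₃' t)
    (h₄ : HasDerivAt p₄ p₄' t) (hpar : ∀ᶠ τ in 𝓝 t, p₁ τ + p₃ τ = p₂ τ + p₄ τ)
    (horth : ⟪p₂ t - p₁ t, p₄ t - p₁ t⟫ = 0) (hccw : 0 < pdet (p₂ t - p₁ t) (p₄ t - p₁ t)) :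
    ‖p₃ t - p₂ t‖ * deriv (fun τ => ‖p₂ τ - p₁ τ‖) t
        - ‖p₂ t - p₁ t‖ * deriv (fun τ => ‖p₃ τ - p₂ τ‖) t
      = pdet (p₂ t) p₂' - pdet (p₁ t) p₁' + (pdet (p₄ t) p₄' - pdet (p₃ t) p₃') := by
  have hp₄ : p₄ =ᶠ[𝓝 t] p₁ + p₃ - p₂ :=
    hpar.mono fun τ h => by simp only [Pi.add_apply, Pi.sub_apply, h]; abel
  have hp₄t : p₄ t = p₁ t + p₃ t - p₂ t := hp₄.eq_of_nhds
  have hp₄' : p₄' = p₁' + p₃' - p₂' := h₄.unique (((h₁.add h₃).sub h₂).congr_of_eventuallyEq hp₄)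
  have hside : p₄ t - p₁ t = p₃ t - p₂ t := by rw [hp₄t]; abel
  rw [hside] at horth hccw
  have hu : p₂ t - p₁ t ≠ 0 := fun h => by simp [h, pdet] at hccw
  have hw : p₃ t - p₂ t ≠ 0 := fun h => by simp [h, pdet] at hccw
  have hX : HasDerivAt (fun τ => ‖p₂ τ - p₁ τ‖) _ t := (h₂.sub h₁).norm hu
  have hY : HasDerivAt (fun τ => ‖p₃ τ - p₂ τ‖) _ t := (h₃.sub h₂).norm hw
  simp only [Pi.sub_apply] at hX hY
  rw [hX.deriv, hY.deriv,
    norm_mul_inner_div_sub_eq_pdet horth hccw, hp₄t, hp₄', pdet_parallelogram]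

section sweptArea

/-- Twice the signed area swept out by the segment from the origin to `γ x` for `x ∈ [0, σ]`. -/
def sweptArea (γ : ℝ → EuclideanSpace ℝ (Fin 2)) (σ : ℝ) : ℝ :=
  ∫ x in (0 : ℝ)..σ, pdet (γ x) (deriv γ x)

variable {γ : ℝ → EuclideanSpace ℝ (Fin 2)}

theorem continuous_pdet_deriv (hγ : ContDiff ℝ 1 γ) :
    Continuous fun x => pdet (γ x) (deriv γ x) := by
  have hγ' := hγ.continuous_deriv le_rfl
  unfold pdet
  fun_prop

theorem hasDerivAt_sweptArea (hγ : ContDiff ℝ 1 γ) (σ : ℝ) :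
    HasDerivAt (sweptArea γ) (pdet (γ σ) (deriv γ σ)) σ :=
  (continuous_pdet_deriv hγ).integral_hasStrictDerivAt 0 σ |>.hasDerivAt

theorem continuous_sweptArea (hγ : ContDiff ℝ 1 γ) : Continuous (sweptArea γ) :=
  continuous_iff_continuousAt.2 fun σ => (hasDerivAt_sweptArea hγ σ).continuousAt

theorem hasDerivAt_sweptArea_comp (hγ : ContDiff ℝ 1 γ) {s : ℝ → ℝ} {t : ℝ}
    (hs : DifferentiableAt ℝ s t) :
    HasDerivAt (fun τ => sweptArea γ (s τ)) (pdet (γ (s t)) (deriv s t • deriv γ (s t))) t := by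
  rw [pdet_smul_right, mul_comm]
  exact (hasDerivAt_sweptArea hγ (s t)).comp t hs.hasDerivAt

theorem sweptArea_add_period (hγ : ContDiff ℝ 1 γ) {T : ℝ} (hper : Function.Periodic γ T)
    (σ : ℝ) : sweptArea γ (σ + T) = sweptArea γ σ + sweptArea γ T := by
  have hq : Function.Periodic (fun x => pdet (γ x) (deriv γ x)) T := fun x => by
    simp only [hper x, ← deriv_comp_add_const, hper.funext]
  have hint := (continuous_pdet_deriv hγ).intervalIntegrable (μ := MeasureTheory.volume)
  have hshift := intervalIntegral.integral_comp_add_right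
    (fun x => pdet (γ x) (deriv γ x)) T (a := 0) (b := σ)
  simp only [hq _, zero_add] at hshift
  rw [sweptArea, ← intervalIntegral.integral_add_adjacent_intervals (hint 0 T) (hint T (σ + T)),
    ← hshift, add_comm, sweptArea, sweptArea]

end sweptArea

/-- Sweep theorem, null-arc case: if the path of rectangles degenerates at
both ends to a chord of `γ` (`s₂ = s₃` and `s₄ = s₁ + 1`, so `Y = 0` there),
then the shape loop bounds signed area `0`. -/
theorem stmt7
    (γ : ℝ → EuclideanSpace ℝ (Fin 2)) (hγ : ContDiff ℝ 1 γ)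
    (hper : ∀ s : ℝ, γ (s + 1) = γ s)
    (s₁ s₂ s₃ s₄ : ℝ → ℝ)
    (hc₁ : ContinuousOn s₁ (Set.Icc (0:ℝ) 1)) (hc₂ : ContinuousOn s₂ (Set.Icc (0:ℝ) 1))
    (hc₃ : ContinuousOn s₃ (Set.Icc (0:ℝ) 1)) (hc₄ : ContinuousOn s₄ (Set.Icc (0:ℝ) 1))
    (hd₁ : ∀ t ∈ Set.Ioo (0:ℝ) 1, DifferentiableAt ℝ s₁ t)
    (hd₂ : ∀ t ∈ Set.Ioo (0:ℝ) 1, DifferentiableAt ℝ s₂ t)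
    (hd₃ : ∀ t ∈ Set.Ioo (0:ℝ) 1, DifferentiableAt ℝ s₃ t)
    (hd₄ : ∀ t ∈ Set.Ioo (0:ℝ) 1, DifferentiableAt ℝ s₄ t)
    (hpar : ∀ t ∈ Set.Icc (0:ℝ) 1, γ (s₁ t) + γ (s₃ t) = γ (s₂ t) + γ (s₄ t))
    (hperp : ∀ t ∈ Set.Icc (0:ℝ) 1, inner ℝ (γ (s₂ t) - γ (s₁ t)) (γ (s₄ t) - γ (s₁ t)) = (0 : ℝ))
    (hccw : ∀ t ∈ Set.Ioo (0:ℝ) 1, pdet (γ (s₂ t) - γ (s₁ t)) (γ (s₄ t) - γ (s₁ t)) > 0)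
    (X Y : ℝ → ℝ)
    (hX : X = fun t => ‖γ (s₂ t) - γ (s₁ t)‖)
    (hY : Y = fun t => ‖γ (s₃ t) - γ (s₂ t)‖)
    (hint : IntervalIntegrable (fun t => Y t * deriv X t - X t * deriv Y t)
      MeasureTheory.volume 0 1)
    (h0₂₃ : s₂ 0 = s₃ 0) (h0₄₁ : s₄ 0 = s₁ 0 + 1)
    (h1₂₃ : s₂ 1 = s₃ 1) (h1₄₁ : s₄ 1 = s₁ 1 + 1) :
    ∫ t in (0:ℝ)..1, (Y t * deriv X t - X t * deriv Y t) = 0 := by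
  subst hX hY
  have hp : ∀ (s : ℝ → ℝ) (t : ℝ), DifferentiableAt ℝ s t →
      HasDerivAt (fun τ => γ (s τ)) (deriv s t • deriv γ (s t)) t := fun s t hs =>
    ((hγ.differentiable one_ne_zero).differentiableAt.hasDerivAt).scomp t hs.hasDerivAt
  set G : ℝ → ℝ := fun τ => sweptArea γ (s₂ τ) - sweptArea γ (s₁ τ)
    + (sweptArea γ (s₄ τ) - sweptArea γ (s₃ τ))
  have hG_cont : ContinuousOn G (Icc 0 1) := by
    have hΛ := continuous_sweptArea hγ
    exact ((hΛ.comp_continuousOn hc₂).sub (hΛ.comp_continuousOn hc₁)).add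
      ((hΛ.comp_continuousOn hc₄).sub (hΛ.comp_continuousOn hc₃))
  have hG_deriv : ∀ t ∈ Ioo (0 : ℝ) 1, HasDerivAt G
      (‖γ (s₃ t) - γ (s₂ t)‖ * deriv (fun τ => ‖γ (s₂ τ) - γ (s₁ τ)‖) t
        - ‖γ (s₂ t) - γ (s₁ t)‖ * deriv (fun τ => ‖γ (s₃ τ) - γ (s₂ τ)‖) t) t := by
    intro t ht
    have hpar_near : ∀ᶠ τ in 𝓝 t, γ (s₁ τ) + γ (s₃ τ) = γ (s₂ τ) + γ (s₄ τ) :=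
      eventually_of_mem (Ioo_mem_nhds ht.1 ht.2) fun τ hτ => hpar τ (Ioo_subset_Icc_self hτ)
    rw [sweep_rate_eq_of_rectangle (hp s₁ t (hd₁ t ht)) (hp s₂ t (hd₂ t ht))
      (hp s₃ t (hd₃ t ht)) (hp s₄ t (hd₄ t ht)) hpar_near
      (hperp t (Ioo_subset_Icc_self ht)) (hccw t ht)]
    exact ((hasDerivAt_sweptArea_comp hγ (hd₂ t ht)).sub
      (hasDerivAt_sweptArea_comp hγ (hd₁ t ht))).add
      ((hasDerivAt_sweptArea_comp hγ (hd₄ t ht)).sub (hasDerivAt_sweptArea_comp hγ (hd₃ t ht)))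
  have hG_chord : ∀ t, s₂ t = s₃ t → s₄ t = s₁ t + 1 → G t = sweptArea γ 1 := by
    intro t h₂₃ h₄₁
    simp only [G, h₂₃, h₄₁, sweptArea_add_period hγ hper]
    ring
  rw [intervalIntegral.integral_eq_sub_of_hasDerivAt_of_le zero_le_one hG_cont hG_deriv hint,
    hG_chord 1 h1₂₃ h1₄₁, hG_chord 0 h0₂₃ h0₄₁, sub_self]
end
end

section
/- Suppose s₁, s₂, s₃, s₄ : [0,1] → ℝ are continuously differentiable and trace rectangles gracing γ on [0,1], and suppose there is a constant r > 0 with Y(t) = r·X(t) for all t ∈ [0,1] (the rectangles all have the same aspect ratio). Then A is constant on [0,1]; in particular A(1) = A(0). -/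
/-!
Differentiating the arc–chord area `A_j` gives `½ det(p_{j+1} − p_j, ṗ_j + ṗ_{j+1})`: the
derivative of the arc integral cancels against part of the derivative of the chord term, and
periodicity of `γ` lets the last arc, which ends at `s₁ + 1`, be treated like the others. With
`u = p₂ − p₁`, `v = p₄ − p₁` and `p₃ = p₂ + p₄ − p₁` the four contributions add up to
`A′ = det(u̇, v) − det(u, v̇)`. A rectangle of aspect ratio `r` has `v = r • J u`, where `J` is
the quarter turn, so `v̇ = r • J u̇` and both terms equal `r ⟪u, u̇⟫`. Hence `A′ = 0` on `[0,1]`.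
-/

noncomputable section

open Set

local notation "ℝ²" => EuclideanSpace ℝ (Fin 2)

def rot90 : ℝ² →L[ℝ] ℝ² :=
  LinearMap.toContinuousLinearMap
    { toFun := fun u => !₂[-u 1, u 0]
      map_add' := fun u v => by ext i; fin_cases i <;> simp [add_comm]
      map_smul' := fun c u => by ext i; fin_cases i <;> simp }

@[simp] lemma rot90_apply_zero (u : ℝ²) : rot90 u 0 = -u 1 := rfl
@[simp] lemma rot90_apply_one (u : ℝ²) : rot90 u 1 = u 0 := rfl

lemma norm_sq_eq_fin_two (u : ℝ²) : ‖u‖ ^ 2 = u 0 ^ 2 + u 1 ^ 2 := by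
  simp [EuclideanSpace.norm_sq_eq, Fin.sum_univ_two]

lemma inner_eq_fin_two (u v : ℝ²) : inner ℝ u v = u 0 * v 0 + u 1 * v 1 := by
  simp [PiLp.inner_apply, Fin.sum_univ_two, mul_comm]

lemma eq_smul_rot90_of_inner_eq_zero {u v : ℝ²} {r : ℝ} (hr : 0 < r) (hperp : inner ℝ u v = (0:ℝ))
    (hnorm : ‖v‖ = r * ‖u‖) (hpos : 0 < pdet u v) : v = r • rot90 u := by
  rw [inner_eq_fin_two] at hperp
  have hsq : v 0 ^ 2 + v 1 ^ 2 = r ^ 2 * (u 0 ^ 2 + u 1 ^ 2) := by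
    rw [← norm_sq_eq_fin_two, ← norm_sq_eq_fin_two, hnorm, mul_pow]
  unfold pdet at hpos
  -- Lagrange's identity `det(u,v)² + ⟪u,v⟫² = ‖u‖²‖v‖²`.
  have hdet : u 0 * v 1 - u 1 * v 0 = r * (u 0 ^ 2 + u 1 ^ 2) := by
    refine (pow_left_inj₀ hpos.le (by positivity) two_ne_zero).mp ?_
    linear_combination (u 0 ^ 2 + u 1 ^ 2) * hsq - (u 0 * v 0 + u 1 * v 1) * hperp
  have hu : 0 < u 0 ^ 2 + u 1 ^ 2 := pos_of_mul_pos_right (hdet ▸ hpos) hr.le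
  refine PiLp.ext (Fin.forall_fin_two.mpr ⟨?_, ?_⟩) <;> refine mul_right_cancel₀ hu.ne' ?_ <;>
    simp only [PiLp.smul_apply, smul_eq_mul, rot90_apply_zero, rot90_apply_one]
  · linear_combination u 0 * hperp - u 1 * hdet
  · linear_combination u 1 * hperp + u 0 * hdet

theorem HasDerivWithinAt.pdet {f g : ℝ → ℝ²} {f' g' : ℝ²} {s : Set ℝ} {t : ℝ}
    (hf : HasDerivWithinAt f f' s t) (hg : HasDerivWithinAt g g' s t) :
    HasDerivWithinAt (fun t => pdet (f t) (g t)) (pdet f' (g t) + pdet (f t) g') s t := by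
  have coord {h : ℝ → ℝ²} {h' : ℝ²} (hh : HasDerivWithinAt h h' s t) (i : Fin 2) :
      HasDerivWithinAt (fun t => h t i) (h' i) s t :=
    (EuclideanSpace.proj (𝕜 := ℝ) i).hasFDerivAt.comp_hasDerivWithinAt t hh
  refine (((coord hf 0).mul (coord hg 1)).sub ((coord hf 1).mul (coord hg 0))).congr_deriv ?_
  unfold _root_.pdet; ring

def arcChordArea (γ : ℝ → ℝ²) (a b : ℝ) : ℝ :=
  (1/2) * (∫ s in a..b, pdet (γ s) (deriv γ s)) + (1/2) * pdet (γ b) (γ a)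

theorem hasDerivWithinAt_arcChordArea {γ : ℝ → ℝ²} (hγ : ContDiff ℝ 1 γ) {a b : ℝ → ℝ}
    {a' b' : ℝ} {s : Set ℝ} {t : ℝ} (ha : HasDerivWithinAt a a' s t)
    (hb : HasDerivWithinAt b b' s t) :
    HasDerivWithinAt (fun t => arcChordArea γ (a t) (b t))
      ((1/2) * pdet (γ (b t) - γ (a t)) (a' • deriv γ (a t) + b' • deriv γ (b t))) s t := by
  have hγ' := hγ.continuous_deriv le_rfl
  have hF : Continuous fun x => pdet (γ x) (deriv γ x) := by
    have := hγ.continuous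
    unfold pdet; fun_prop
  set G := fun y => ∫ x in (0:ℝ)..y, pdet (γ x) (deriv γ x)
  have hG (y : ℝ) : HasDerivAt G (pdet (γ y) (deriv γ y)) y :=
    (hF.integral_hasStrictDerivAt 0 y).hasDerivAt
  have hpath {c : ℝ → ℝ} {c' : ℝ} (hc : HasDerivWithinAt c c' s t) :
      HasDerivWithinAt (fun t => γ (c t)) (c' • deriv γ (c t)) s t :=
    ((hγ.differentiable one_ne_zero) (c t)).hasDerivAt.scomp_hasDerivWithinAt t hc
  have hsplit : (fun t => arcChordArea γ (a t) (b t))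
      = fun t => (1/2) * (G (b t) - G (a t)) + (1/2) * pdet (γ (b t)) (γ (a t)) := by
    funext t
    rw [arcChordArea, intervalIntegral.integral_interval_sub_left
      (hF.intervalIntegrable _ _) (hF.intervalIntegrable _ _)]
  rw [hsplit]
  refine ((((hG (b t)).comp_hasDerivWithinAt t hb).sub
    ((hG (a t)).comp_hasDerivWithinAt t ha)).const_mul (1/2) |>.add
    (((hpath hb).pdet (hpath ha)).const_mul (1/2))).congr_deriv ?_
  simp only [pdet, PiLp.add_apply, PiLp.sub_apply, PiLp.smul_apply, smul_eq_mul]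
  ring

theorem Function.Periodic.deriv {𝕜 F : Type*} [NontriviallyNormedField 𝕜] [NormedAddCommGroup F]
    [NormedSpace 𝕜 F] {f : 𝕜 → F} {c : 𝕜} (h : Function.Periodic f c) :
    Function.Periodic (deriv f) c := fun x => by
  rw [← deriv_comp_add_const, h.funext]

lemma pdet_alternating_sum_eq_zero {p₁ p₂ p₃ p₄ q₁ q₂ q₃ q₄ : ℝ²} {r : ℝ}
    (hp : p₁ + p₃ = p₂ + p₄) (hq : q₁ + q₃ = q₂ + q₄)
    (hp' : p₄ - p₁ = r • rot90 (p₂ - p₁)) (hq' : q₄ - q₁ = r • rot90 (q₂ - q₁)) :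
    pdet (p₂ - p₁) (q₁ + q₂) - pdet (p₃ - p₂) (q₂ + q₃)
      + pdet (p₄ - p₃) (q₃ + q₄) - pdet (p₁ - p₄) (q₄ + q₁) = 0 := by
  obtain rfl : p₃ = p₂ + p₄ - p₁ := eq_sub_of_add_eq' hp
  obtain rfl : q₃ = q₂ + q₄ - q₁ := eq_sub_of_add_eq' hq
  obtain rfl : p₄ = r • rot90 (p₂ - p₁) + p₁ := eq_add_of_sub_eq hp'
  obtain rfl : q₄ = r • rot90 (q₂ - q₁) + q₁ := eq_add_of_sub_eq hq'
  simp only [pdet, PiLp.add_apply, PiLp.sub_apply, PiLp.smul_apply, smul_eq_mul,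
    rot90_apply_zero, rot90_apply_one]
  ring

theorem rectangle_area_rate_eq_zero {p₁ p₂ p₃ p₄ : ℝ → ℝ²} {q₁ q₂ q₃ q₄ : ℝ²} {r : ℝ}
    {s : Set ℝ} {t : ℝ} (hs : UniqueDiffWithinAt ℝ s t) (ht : t ∈ s)
    (h₁ : HasDerivWithinAt p₁ q₁ s t) (h₂ : HasDerivWithinAt p₂ q₂ s t)
    (h₃ : HasDerivWithinAt p₃ q₃ s t) (h₄ : HasDerivWithinAt p₄ q₄ s t)
    (hpar : ∀ x ∈ s, p₁ x + p₃ x = p₂ x + p₄ x)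
    (hside : ∀ x ∈ s, p₄ x - p₁ x = r • rot90 (p₂ x - p₁ x)) :
    pdet (p₂ t - p₁ t) (q₁ + q₂) - pdet (p₃ t - p₂ t) (q₂ + q₃)
      + pdet (p₄ t - p₃ t) (q₃ + q₄) - pdet (p₁ t - p₄ t) (q₄ + q₁) = 0 := by
  have hq : q₁ + q₃ = q₂ + q₄ :=
    hs.eq_deriv _ (h₁.add h₃) ((h₂.add h₄).congr_of_mem hpar ht)
  have hq' : q₄ - q₁ = r • rot90 (q₂ - q₁) :=
    hs.eq_deriv _ (h₄.sub h₁)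
      (((rot90.hasFDerivAt.comp_hasDerivWithinAt t (h₂.sub h₁)).const_smul r).congr_of_mem
        hside ht)
  exact pdet_alternating_sum_eq_zero (hpar t ht) hq (hside t ht) hq'

theorem constant_of_hasDerivWithinAt_zero {f : ℝ → ℝ} {a b : ℝ} (hab : a < b)
    (hf : ∀ x ∈ Icc a b, HasDerivWithinAt f 0 (Icc a b) x) : ∀ x ∈ Icc a b, f x = f a :=
  constant_of_derivWithin_zero (fun x hx => (hf x hx).differentiableWithinAt) fun x hx =>
    (hf x (Ico_subset_Icc_self hx)).derivWithin (uniqueDiffOn_Icc hab x (Ico_subset_Icc_self hx))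

/-- If a continuously differentiable path of rectangles gracing `γ` has
constant aspect ratio (`Y = r·X` with `r > 0`), then `A` is constant on
`[0,1]`; in particular `A 1 = A 0`. -/
theorem stmt10
    (γ : ℝ → EuclideanSpace ℝ (Fin 2)) (hγ : ContDiff ℝ 1 γ)
    (hper : ∀ s : ℝ, γ (s + 1) = γ s)
    (s₁ s₂ s₃ s₄ : ℝ → ℝ)
    (hc₁ : ContDiffOn ℝ 1 s₁ (Set.Icc (0:ℝ) 1)) (hc₂ : ContDiffOn ℝ 1 s₂ (Set.Icc (0:ℝ) 1))
    (hc₃ : ContDiffOn ℝ 1 s₃ (Set.Icc (0:ℝ) 1)) (hc₄ : ContDiffOn ℝ 1 s₄ (Set.Icc (0:ℝ) 1))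
    (hpar : ∀ t ∈ Set.Icc (0:ℝ) 1, γ (s₁ t) + γ (s₃ t) = γ (s₂ t) + γ (s₄ t))
    (hperp : ∀ t ∈ Set.Icc (0:ℝ) 1, inner ℝ (γ (s₂ t) - γ (s₁ t)) (γ (s₄ t) - γ (s₁ t)) = (0 : ℝ))
    (hccw : ∀ t ∈ Set.Icc (0:ℝ) 1, pdet (γ (s₂ t) - γ (s₁ t)) (γ (s₄ t) - γ (s₁ t)) > 0)
    (X Y : ℝ → ℝ)
    (hX : X = fun t => ‖γ (s₂ t) - γ (s₁ t)‖)
    (hY : Y = fun t => ‖γ (s₃ t) - γ (s₂ t)‖)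
    (A₁ A₂ A₃ A₄ : ℝ → ℝ)
    (hA₁ : A₁ = fun t => (1/2) * (∫ s in (s₁ t)..(s₂ t), pdet (γ s) (deriv γ s))
        + (1/2) * pdet (γ (s₂ t)) (γ (s₁ t)))
    (hA₂ : A₂ = fun t => (1/2) * (∫ s in (s₂ t)..(s₃ t), pdet (γ s) (deriv γ s))
        + (1/2) * pdet (γ (s₃ t)) (γ (s₂ t)))
    (hA₃ : A₃ = fun t => (1/2) * (∫ s in (s₃ t)..(s₄ t), pdet (γ s) (deriv γ s))
        + (1/2) * pdet (γ (s₄ t)) (γ (s₃ t)))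
    (hA₄ : A₄ = fun t => (1/2) * (∫ s in (s₄ t)..(s₁ t + 1), pdet (γ s) (deriv γ s))
        + (1/2) * pdet (γ (s₁ t + 1)) (γ (s₄ t)))
    (A : ℝ → ℝ) (hA : A = fun t => (A₁ t + A₃ t) - (A₂ t + A₄ t))
    (r : ℝ) (hr : 0 < r) (hratio : ∀ t ∈ Set.Icc (0:ℝ) 1, Y t = r * X t) :
    (∀ t ∈ Set.Icc (0:ℝ) 1, A t = A 0) ∧ A 1 = A 0 := by
  have hside (t) (ht : t ∈ Icc (0:ℝ) 1) :
      γ (s₄ t) - γ (s₁ t) = r • rot90 (γ (s₂ t) - γ (s₁ t)) := by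
    have hopp : γ (s₃ t) - γ (s₂ t) = γ (s₄ t) - γ (s₁ t) := by
      rw [sub_eq_sub_iff_add_eq_add, add_comm, hpar t ht, add_comm]
    refine eq_smul_rot90_of_inner_eq_zero hr (hperp t ht) ?_ (hccw t ht)
    simpa only [hX, hY, hopp] using hratio t ht
  have hA' : A = fun t => (arcChordArea γ (s₁ t) (s₂ t) + arcChordArea γ (s₃ t) (s₄ t))
      - (arcChordArea γ (s₂ t) (s₃ t) + arcChordArea γ (s₄ t) (s₁ t + 1)) := by
    subst hA hA₁ hA₂ hA₃ hA₄; rfl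
  have hderiv (t) (ht : t ∈ Icc (0:ℝ) 1) : HasDerivWithinAt A 0 (Icc 0 1) t := by
    have hs {σ : ℝ → ℝ} (hσ : ContDiffOn ℝ 1 σ (Icc 0 1)) :
        HasDerivWithinAt σ (derivWithin σ (Icc 0 1) t) (Icc 0 1) t :=
      ((hσ.differentiableOn one_ne_zero) t ht).hasDerivWithinAt
    have hp {σ : ℝ → ℝ} (hσ : ContDiffOn ℝ 1 σ (Icc 0 1)) : HasDerivWithinAt (fun t => γ (σ t))
        (derivWithin σ (Icc 0 1) t • deriv γ (σ t)) (Icc 0 1) t :=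
      ((hγ.differentiable one_ne_zero) (σ t)).hasDerivAt.scomp_hasDerivWithinAt t (hs hσ)
    have h₄₁ := hasDerivWithinAt_arcChordArea hγ (hs hc₄) ((hs hc₁).add_const 1)
    rw [hper, Function.Periodic.deriv hper] at h₄₁
    rw [hA']
    refine (((hasDerivWithinAt_arcChordArea hγ (hs hc₁) (hs hc₂)).add
      (hasDerivWithinAt_arcChordArea hγ (hs hc₃) (hs hc₄))).sub
      ((hasDerivWithinAt_arcChordArea hγ (hs hc₂) (hs hc₃)).add h₄₁)).congr_deriv ?_
    linear_combination (1/2) * rectangle_area_rate_eq_zero (uniqueDiffOn_Icc one_pos t ht) ht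
      (hp hc₁) (hp hc₂) (hp hc₃) (hp hc₄) hpar hside
  have hconst := constant_of_hasDerivWithinAt_zero zero_lt_one hderiv
  exact ⟨hconst, hconst 1 (right_mem_Icc.mpr zero_le_one)⟩
end
end
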